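/- arXiv:2008.09095 — 5 statements merged into one kernel-verified Lean document; each statement's English description precedes it below -/
import Mathlib

section
/- Consider a pullback square of chain complexes Q → A, Q → C, over maps f: A → B and g: C → B. Suppose there is a chain map φ: B → A with f∘φ = id_B and a chain homotopy H between φ∘f and id_A satisfying f∘H = 0. Then the induced map f': Q → C admits a section φ': C → Q with f'∘φ' = id_C and φ'∘f' chain homotopic to id_Q. In particular, f': Q → C is a chain homotopy equivalence. -/
open CategoryTheory CategoryTheory.Limits

/--
Consider a pullback square of chain complexes `Q → A`, `Q → C`, over maps
`f : A → B` and `g : C → B`.  Suppose there is a chain map `φ : B → A` with `f ∘ φ = id_B`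
and a chain homotopy `H` between `φ ∘ f` and `id_A` satisfying `f ∘ H = 0`.  Then the induced
map `f' : Q → C` admits a section `φ' : C → Q` with `f' ∘ φ' = id_C` and `φ' ∘ f'` chain
homotopic to `id_Q`.  In particular `f' : Q → C` is a chain homotopy equivalence.
-/
theorem statement5 {R : Type*} [Ring R]
    {Q A B C : ChainComplex (ModuleCat R) ℤ}
    (g' : Q ⟶ A) (f' : Q ⟶ C) (f : A ⟶ B) (g : C ⟶ B)
    (hpb : IsPullback g' f' f g)
    (φ : B ⟶ A) (hsec : φ ≫ f = 𝟙 B)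
    (H : Homotopy (f ≫ φ) (𝟙 A))
    (hH : ∀ i j, H.hom i j ≫ f.f j = 0) :
    (∃ φ' : C ⟶ Q, φ' ≫ f' = 𝟙 C ∧ Nonempty (Homotopy (f' ≫ φ') (𝟙 Q))) ∧
      Nonempty (HomotopyEquiv Q C) := by
  -- the section
  have hcomm : (g ≫ φ) ≫ f = 𝟙 C ≫ g := by
    rw [Category.assoc, hsec, Category.comp_id, Category.id_comp]
  set φ' : C ⟶ Q := hpb.lift (g ≫ φ) (𝟙 C) hcomm with hφ'
  have hφ'g' : φ' ≫ g' = g ≫ φ := hpb.lift_fst _ _ _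
  have hφ'f' : φ' ≫ f' = 𝟙 C := hpb.lift_snd _ _ _
  -- degreewise pullbacks
  have P : ∀ j : ℤ, IsPullback (g'.f j) (f'.f j) (f.f j) (g.f j) := fun j =>
    hpb.map (HomologicalComplex.eval (ModuleCat R) (ComplexShape.down ℤ) j)
  -- the lifted homotopy
  have hlift : ∀ i j : ℤ, (g'.f i ≫ H.hom i j) ≫ f.f j = (0 : Q.X i ⟶ C.X j) ≫ g.f j := by
    intro i j
    rw [Category.assoc, hH, comp_zero, zero_comp]
  set h : ∀ i j : ℤ, Q.X i ⟶ Q.X j := fun i j => (P j).lift (g'.f i ≫ H.hom i j) 0 (hlift i j)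
    with hh
  have hg' : ∀ i j, h i j ≫ g'.f j = g'.f i ≫ H.hom i j := fun i j => (P j).lift_fst _ _ _
  have hf' : ∀ i j, h i j ≫ f'.f j = 0 := fun i j => (P j).lift_snd _ _ _
  have hzero : ∀ i j, ¬ (ComplexShape.down ℤ).Rel j i → h i j = 0 := by
    intro i j hij
    apply (P j).hom_ext
    · rw [hg', H.zero i j hij, comp_zero, zero_comp]
    · rw [hf', zero_comp]
  have hsquare : f' ≫ g = g' ≫ f := hpb.w.symm
  have hc1 : ∀ k, φ'.f k ≫ g'.f k = g.f k ≫ φ.f k := by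
    intro k
    have := congrArg (fun p => HomologicalComplex.Hom.f p k) hφ'g'
    simpa using this
  have hc2 : ∀ k, φ'.f k ≫ f'.f k = 𝟙 (C.X k) := by
    intro k
    have := congrArg (fun p => HomologicalComplex.Hom.f p k) hφ'f'
    simpa using this
  have Hty : Homotopy (f' ≫ φ') (𝟙 Q) := by
    refine ⟨h, hzero, ?_⟩
    intro i
    have hsq : f'.f i ≫ g.f i = g'.f i ≫ f.f i := by
      have := congrArg (fun p => HomologicalComplex.Hom.f p i) hsquare
      simpa using this
    have e1g : dNext i h ≫ g'.f i = g'.f i ≫ dNext i H.hom := by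
      simp only [dNext, AddMonoidHom.mk'_apply]
      rw [Category.assoc, hg', ← Category.assoc, ← Category.assoc,
        g'.comm i ((ComplexShape.down ℤ).next i)]
    have e2g : prevD i h ≫ g'.f i = g'.f i ≫ prevD i H.hom := by
      simp only [prevD, AddMonoidHom.mk'_apply]
      rw [Category.assoc, ← g'.comm ((ComplexShape.down ℤ).prev i) i, ← Category.assoc, hg', Category.assoc]
    have e1f : dNext i h ≫ f'.f i = 0 := by
      simp only [dNext, AddMonoidHom.mk'_apply]
      rw [Category.assoc, hf', comp_zero]
    have e2f : prevD i h ≫ f'.f i = 0 := by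
      simp only [prevD, AddMonoidHom.mk'_apply]
      rw [Category.assoc, ← f'.comm ((ComplexShape.down ℤ).prev i) i, ← Category.assoc, hf', zero_comp]
    have Hc := H.comm i
    simp only [HomologicalComplex.comp_f, HomologicalComplex.id_f] at Hc
    apply (P i).hom_ext
    · simp only [HomologicalComplex.comp_f, HomologicalComplex.id_f]
      rw [Category.assoc, hc1]
      calc f'.f i ≫ g.f i ≫ φ.f i
          = g'.f i ≫ f.f i ≫ φ.f i := by
            rw [← Category.assoc, hsq, Category.assoc]
        _ = g'.f i ≫ (dNext i H.hom + prevD i H.hom + 𝟙 (A.X i)) := by rw [Hc]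
        _ = dNext i h ≫ g'.f i + prevD i h ≫ g'.f i + 𝟙 (Q.X i) ≫ g'.f i := by
            rw [Preadditive.comp_add, Preadditive.comp_add, e1g, e2g, Category.comp_id,
              Category.id_comp]
        _ = (dNext i h + prevD i h + 𝟙 (Q.X i)) ≫ g'.f i := by
            rw [Preadditive.add_comp, Preadditive.add_comp]
    · simp only [HomologicalComplex.comp_f, HomologicalComplex.id_f]
      rw [Category.assoc, hc2, Category.comp_id, Preadditive.add_comp, Preadditive.add_comp,
        e1f, e2f, Category.id_comp, zero_add, zero_add]
  refine ⟨⟨φ', hφ'f', ⟨Hty⟩⟩, ⟨⟨f', φ', Hty, Homotopy.ofEq hφ'f'⟩⟩⟩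
end

section
/- Let k be a graded commutative ring with η of degree 1, 2η = 0, and Γ = k[s]/(s² = ηs) with s primitive of degree 1. Let P_* be the complex of free Γ-modules with P_b = Γ{p_b} (p_b of internal degree b) and differential ∂(p_{b+1}) = p_b·s for b even, ∂(p_{b+1}) = p_b·(s+η) for b odd, augmented by ε(p_0) = 1. Then P_* → k is a resolution: the augmented complex is exact. -/
/-!
**Statement 12.**  Let `k` be a (graded) commutative ring with `η` of degree 1, `2η = 0`, and
`Γ = k[s]/(s² = ηs)` with `s` primitive of degree 1.  Let `P_*` be the complex of free
`Γ`-modules with `P_b = Γ{p_b}` and differential `∂(p_{b+1}) = p_b·s` for `b` even and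
`∂(p_{b+1}) = p_b·(s+η)` for `b` odd, augmented by `ε(p_0) = 1`.  Then `P_* → k` is a
resolution: the augmented complex is exact.

We use the concrete model `Γ = k × k` with `k`-basis `(1, s)`, so that `P_b ≅ k × k`;
right multiplication by `s` is `(a, b) ↦ (0, a + ηb)` (since `s² = ηs`), right multiplication
by `s + η` is `(a, b) ↦ (ηa, a)` (using `2η = 0`), and the augmentation is `(a, b) ↦ a`.
-/

variable {k : Type*} [CommRing k]

/-- Right multiplication by `s` on `Γ = k ⊕ k·s`, where `s² = ηs`. -/
noncomputable def mulS (η : k) : k × k →ₗ[k] k × k :=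
  LinearMap.prod 0 (LinearMap.fst k k k + η • LinearMap.snd k k k)

/-- Right multiplication by `s + η` on `Γ = k ⊕ k·s`, where `s² = ηs` and `2η = 0`. -/
noncomputable def mulSEta (η : k) : k × k →ₗ[k] k × k :=
  LinearMap.prod (η • LinearMap.fst k k k) (LinearMap.fst k k k)

/-- The differential `∂_{b+1} : P_{b+1} → P_b`: multiplication by `s` for `b` even and by
`s + η` for `b` odd. -/
noncomputable def resD (η : k) (b : ℕ) : k × k →ₗ[k] k × k :=
  if Even b then mulS η else mulSEta η

/-- The augmentation `ε : P_0 = Γ → k`, `ε(p_0) = 1`. -/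
noncomputable def resAug : k × k →ₗ[k] k := LinearMap.fst k k k

theorem statement12 (η : k) (hη : 2 * η = 0) :
    Function.Surjective (resAug (k := k)) ∧
      Function.Exact (resD η 0) (resAug (k := k)) ∧
      ∀ b : ℕ, Function.Exact (resD η (b + 1)) (resD η b) := by
  simp only [resD, mulS, mulSEta]
  have key : ∀ a b : k, (LinearMap.prod (0 : k × k →ₗ[k] k)
      (LinearMap.fst k k k + η • LinearMap.snd k k k)) (a, b) = (0, a + η * b) := by
    intro a b; simp [LinearMap.prod_apply]
  have key2 : ∀ a b : k, (LinearMap.prod (η • LinearMap.fst k k k)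
      (LinearMap.fst k k k)) (a, b) = (η * a, a) := by
    intro a b; simp [LinearMap.prod_apply]
  have hexS : Function.Exact (mulSEta (k := k) η) (mulS (k := k) η) := by
    rintro ⟨a, b⟩
    simp only [mulS, mulSEta, key, key2, Set.mem_range, Prod.ext_iff, Prod.fst_zero,
      Prod.snd_zero]
    constructor
    · rintro ⟨-, h⟩
      refine ⟨(b, 0), ?_, rfl⟩
      simp only [key2]
      linear_combination b * hη - h
    · rintro ⟨⟨x, y⟩, h1, h2⟩
      simp only [key2] at h1 h2
      refine ⟨trivial, ?_⟩
      linear_combination -h1 - η * h2 + x * hη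
  have hexE : Function.Exact (mulS (k := k) η) (mulSEta (k := k) η) := by
    rintro ⟨a, b⟩
    simp only [mulS, mulSEta, key, key2, Set.mem_range, Prod.ext_iff, Prod.fst_zero,
      Prod.snd_zero]
    constructor
    · rintro ⟨-, h⟩
      subst h
      exact ⟨(b, 0), by simp [key]⟩
    · rintro ⟨⟨x, y⟩, h1, h2⟩
      simp only [key] at h1 h2
      exact ⟨by rw [← h1]; ring, h1.symm⟩
  refine ⟨fun x => ⟨(x, 0), rfl⟩, ?_, ?_⟩
  · rintro ⟨a, b⟩
    simp only [resAug, LinearMap.fst_apply, if_pos (Even.zero), Set.mem_range,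
      Prod.ext_iff]
    constructor
    · rintro h
      exact ⟨(b, 0), by simp [key, h]⟩
    · rintro ⟨⟨x, y⟩, h1, h2⟩
      simp only [key] at h1 h2
      exact h1.symm
  · intro b
    by_cases hb : Even b
    · rw [if_pos hb, if_neg (by simp [Nat.even_add_one, hb])]
      exact hexS
    · rw [if_neg hb, if_pos (by simp [Nat.even_add_one, hb])]
      exact hexE
end

section
/- Let Γ = k[s]/(s² = ηs) with 2η = 0 and s primitive, and let P̃_* be the complex with P̃_0 = k{p̃_0}, P̃_a = Γ{p̃_a} for a ≥ 1, and differential ∂̃(p̃_1) = p̃_0, ∂̃(p̃_a) = −p̃_{a−1}(s + aη) for a ≥ 2. Define Φ: P̃_* ⊗_k P̃_* → P̃_* by Φ(p̃_{a1} ⊗ p̃_{a2}) = 0, Φ(p̃_{a1} ⊗ p̃_{a2}s) = Φ(p̃_{a1}s ⊗ p̃_{a2}) = −p̃_{a1+a2}, Φ(p̃_{a1}s ⊗ p̃_{a2}s) = −p̃_{a1+a2}(s+η) for a1, a2 ≥ 1, and by the canonical identifications when a1 = 0 or a2 = 0. Then Φ is a Γ-linear chain map extending the fold map, and Φ = Φ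 ∘ τ (commutativity). -/
/-!
**Statement 14.**  Let `Γ = k[s]/(s² = ηs)` with `2η = 0` and `s` primitive, and let `P̃_*` be
the complex with `P̃_0 = k{p̃_0}`, `P̃_a = Γ{p̃_a}` for `a ≥ 1`, and differential
`∂̃(p̃_1) = p̃_0`, `∂̃(p̃_a) = −p̃_{a−1}(s + aη)` for `a ≥ 2`.  Define
`Φ : P̃_* ⊗_k P̃_* → P̃_*` by `Φ(p̃_{a₁} ⊗ p̃_{a₂}) = 0`,
`Φ(p̃_{a₁} ⊗ p̃_{a₂}s) = Φ(p̃_{a₁}s ⊗ p̃_{a₂}) = −p̃_{a₁+a₂}`,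
`Φ(p̃_{a₁}s ⊗ p̃_{a₂}s) = −p̃_{a₁+a₂}(s+η)` for `a₁, a₂ ≥ 1`, and by the canonical
identifications when `a₁ = 0` or `a₂ = 0`.  Then `Φ` is a `Γ`-linear chain map extending the
fold map, and `Φ = Φ ∘ τ` (commutativity).

Concrete model: `P̃_a = Γ = k × k` (basis `p̃_a, p̃_a s`) for `a ≥ 1` and `P̃_0 = k`; a slot
`P̃_{a₁} ⊗ P̃_{a₂}` with `a₁, a₂ ≥ 1` is `k × k × k × k` with coordinates the coefficients of
`p̃⊗p̃, p̃⊗p̃s, p̃s⊗p̃, p̃s⊗p̃s`; boundary slots `P̃_0 ⊗ P̃_a ≅ P̃_a ≅ P̃_a ⊗ P̃_0` are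
identified with `Γ`, on which `Φ` is the identity (the fold map).  `phiG` is the generic slot
component of `Φ`; `dtilde a = −(s + aη)·` is the differential of `P̃` in degrees `a ≥ 2`, and
`p̃_1 ↦ p̃_0`, `p̃_1 s ↦ 0` in degree 1.  `tpart1 η a₁` and `tpart2 η a₂` are the two Koszul-
signed components of the tensor differential out of a generic slot (the sign on the `1 ⊗ ∂`
part is `−` on the `p̃⊗·` rows and `+` on the `p̃s⊗·` rows, as `‖p̃_a‖ = 2a−1` is odd);
`tsAct η` is the diagonal action of `s` on a generic slot, `tmulS η` the action of `s` on `Γ`,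
and `ttau` the graded twist (sign `−1` exactly on the `p̃⊗p̃` coordinate).
-/

variable {k : Type*} [CommRing k]

/-- Right multiplication by `s + cη` on `Γ = k ⊕ k·s` (using `s² = ηs`). -/
def trmul (η : k) (c : ℕ) : k × k → k × k :=
  fun x => ((c : k) * η * x.1, x.1 + ((c : k) + 1) * η * x.2)

/-- The differential `∂̃_a = −(·(s + aη))` of `P̃` in degrees `a ≥ 2`. -/
def dtilde (η : k) (a : ℕ) : k × k → k × k := fun x => -(trmul η a x)

/-- The generic slot component of `Φ`:
`a·p̃⊗p̃ + b·p̃⊗p̃s + c·p̃s⊗p̃ + d·p̃s⊗p̃s ↦ −(b+c)·p̃ − d·p̃(s+η)`. -/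
def phiG (η : k) : k × k × k × k → k × k :=
  fun x => (-(x.2.1 + x.2.2.1) - x.2.2.2 * η, -x.2.2.2)

/-- The `∂̃ ⊗ 1` component of the tensor differential, from slot `(a₁, a₂)` to
`(a₁ − 1, a₂)`, for `a₁ ≥ 2` (no Koszul sign; the `−` of `∂̃` is included). -/
def tpart1 (η : k) (a₁ : ℕ) : k × k × k × k → k × k × k × k :=
  fun x => -(((a₁ : k) * η * x.1, (a₁ : k) * η * x.2.1,
    x.1 + ((a₁ : k) + 1) * η * x.2.2.1, x.2.1 + ((a₁ : k) + 1) * η * x.2.2.2))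

/-- The Koszul-signed `(−1)^{‖x‖} 1 ⊗ ∂̃` component of the tensor differential, from slot
`(a₁, a₂)` to `(a₁, a₂ − 1)`, for `a₂ ≥ 2`. -/
def tpart2 (η : k) (a₂ : ℕ) : k × k × k × k → k × k × k × k :=
  fun x => ((a₂ : k) * η * x.1, x.1 + ((a₂ : k) + 1) * η * x.2.1,
    -((a₂ : k) * η * x.2.2.1), -(x.2.2.1 + ((a₂ : k) + 1) * η * x.2.2.2))

/-- The diagonal action of the primitive `s` on a generic slot of `P̃ ⊗ P̃`. -/
def tsAct (η : k) : k × k × k × k → k × k × k × k :=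
  fun x => (0, x.1 + η * x.2.1, -(x.1 + η * x.2.2.1), x.2.1 + x.2.2.1)

/-- Right multiplication by `s` on `Γ`. -/
def tmulS (η : k) : k × k → k × k := fun x => (0, x.1 + η * x.2)

/-- The graded twist `τ` on a generic slot of `P̃ ⊗ P̃`. -/
def ttau : k × k × k × k → k × k × k × k := fun x => (-x.1, x.2.2.1, x.2.1, x.2.2.2)

/-! Every identity is checked coordinatewise on the basis `p̃⊗p̃, p̃⊗p̃s, p̃s⊗p̃, p̃s⊗p̃s`.
The linearity and commutativity identities hold on the nose; in the chain-map and
`Γ`-linearity identities the two sides differ by a multiple of `2η`, produced by the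
coefficients `aη`, `(a+1)η` of the differentials and by `s² = ηs`, so they hold once `2η = 0`. -/

section

variable (η : k)

theorem phiG_add (x y : k × k × k × k) : phiG η (x + y) = phiG η x + phiG η y := by
  ext <;> simp only [phiG, Prod.fst_add, Prod.snd_add] <;> ring

theorem phiG_smul (c : k) (x : k × k × k × k) : phiG η (c • x) = c • phiG η x := by
  ext <;> simp only [phiG, Prod.smul_fst, Prod.smul_snd, smul_eq_mul] <;> ring

theorem phiG_ttau (x : k × k × k × k) : phiG η (ttau x) = phiG η x := by
  simp only [phiG, ttau, add_comm]

end

section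

variable {η : k}

theorem phiG_tsAct (hη : 2 * η = 0) (x : k × k × k × k) :
    phiG η (tsAct η x) = tmulS η (phiG η x) := by
  ext <;> simp only [phiG, tsAct, tmulS]
  · linear_combination (-x.2.1) * hη
  · linear_combination x.2.2.2 * hη

theorem dtilde_phiG (hη : 2 * η = 0) (a₁ a₂ : ℕ) (x : k × k × k × k) :
    dtilde η (a₁ + a₂ + 4) (phiG η x)
      = phiG η (tpart1 η (a₁ + 2) x) + phiG η (tpart2 η (a₂ + 2) x) := by
  ext <;> simp only [dtilde, trmul, phiG, tpart1, tpart2, Prod.fst_add, Prod.snd_add,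
    Prod.fst_neg, Prod.snd_neg] <;> push_cast
  · linear_combination ((a₂ : k) * x.2.1 + 2 * x.2.1 - x.2.2.1 - η * x.2.2.2) * hη
  · ring

theorem dtilde_phiG_left_one (hη : 2 * η = 0) (a₂ : ℕ) (x : k × k × k × k) :
    dtilde η (a₂ + 3) (phiG η x) = (x.1, x.2.1) + phiG η (tpart2 η (a₂ + 2) x) := by
  ext <;> simp only [dtilde, trmul, phiG, tpart2, Prod.fst_add, Prod.snd_add,
    Prod.fst_neg, Prod.snd_neg] <;> push_cast
  · linear_combination ((a₂ + 3 : k) * x.2.1) * hη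
  · linear_combination x.2.2.2 * hη

theorem dtilde_phiG_right_one (hη : 2 * η = 0) (a₁ : ℕ) (x : k × k × k × k) :
    dtilde η (a₁ + 3) (phiG η x) = phiG η (tpart1 η (a₁ + 2) x) + (-x.1, x.2.2.1) := by
  ext <;> simp only [dtilde, trmul, phiG, tpart1, Prod.fst_add, Prod.snd_add,
    Prod.fst_neg, Prod.snd_neg] <;> push_cast
  · ring
  · linear_combination x.2.2.2 * hη

theorem dtilde_two_phiG (hη : 2 * η = 0) (x : k × k × k × k) :
    dtilde η 2 (phiG η x) = (x.1, x.2.1) + (-x.1, x.2.2.1) := by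
  ext <;> simp only [dtilde, trmul, phiG, Prod.fst_add, Prod.snd_add,
    Prod.fst_neg, Prod.snd_neg] <;> push_cast
  · linear_combination (x.2.1 + x.2.2.1 + η * x.2.2.2) * hη
  · linear_combination (2 * x.2.2.2) * hη

end

theorem statement14 (η : k) (hη : 2 * η = 0) :
    -- chain map, generic slots `(a₁, a₂)` with `a₁, a₂ ≥ 2`:
    (∀ (a₁ a₂ : ℕ) (x : k × k × k × k),
      dtilde η (a₁ + a₂ + 4) (phiG η x)
        = phiG η (tpart1 η (a₁ + 2) x) + phiG η (tpart2 η (a₂ + 2) x)) ∧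
    -- chain map, slots `(1, a₂)` with `a₂ ≥ 2` (`∂̃⊗1` lands in `P̃_0 ⊗ P̃_{a₂} ≅ Γ`,
    -- where `Φ` is the canonical identification, i.e. the fold map):
    (∀ (a₂ : ℕ) (x : k × k × k × k),
      dtilde η (a₂ + 3) (phiG η x) = (x.1, x.2.1) + phiG η (tpart2 η (a₂ + 2) x)) ∧
    -- chain map, slots `(a₁, 1)` with `a₁ ≥ 2`:
    (∀ (a₁ : ℕ) (x : k × k × k × k),
      dtilde η (a₁ + 3) (phiG η x) = phiG η (tpart1 η (a₁ + 2) x) + (-x.1, x.2.2.1)) ∧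
    -- chain map, slot `(1, 1)`:
    (∀ x : k × k × k × k,
      dtilde η 2 (phiG η x) = (x.1, x.2.1) + (-x.1, x.2.2.1)) ∧
    -- `Φ` is `k`-linear and `Γ`-linear (commutes with the action of the generator `s`):
    (∀ x y : k × k × k × k, phiG η (x + y) = phiG η x + phiG η y) ∧
    (∀ (c : k) (x : k × k × k × k), phiG η (c • x) = c • phiG η x) ∧
    (∀ x : k × k × k × k, phiG η (tsAct η x) = tmulS η (phiG η x)) ∧
    -- commutativity: `Φ ∘ τ = Φ`:
    (∀ x : k × k × k × k, phiG η (ttau x) = phiG η x) := by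
  exact ⟨dtilde_phiG hη, dtilde_phiG_left_one hη, dtilde_phiG_right_one hη, dtilde_two_phiG hη,
    phiG_add η, phiG_smul η, phiG_tsAct hη, phiG_ttau η⟩
end

section
/- Let k be a graded commutative ring with η of degree 1, 2η = 0, and let M be a module over Γ = k[s]/(s² = ηs). Consider the differential graded module M[t, t^{−1}] where t has total degree −2, with differential determined by d(t^c · m) = t^{c+1}·(m·s) for c even and d(t^c · m) = t^{c+1}·(m·(s+η)) for c odd. Then d² = 0, and the homology in the t^c-component is ker(s)/im(s+η) for c even and ker(s+η)/im(s) for c odd, where s and s+η denote the action maps M → M. -/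
/-!
**Statement 15.**  Let `k` be a graded commutative ring with `η` of degree 1, `2η = 0`, and let
`M` be a module over `Γ = k[s]/(s² = ηs)`.  Consider the differential graded module
`M[t, t⁻¹]` where `t` has total degree `−2`, with differential determined by
`d(t^c·m) = t^{c+1}·(m·s)` for `c` even and `d(t^c·m) = t^{c+1}·(m·(s+η))` for `c` odd.
Then `d² = 0`, and the homology in the `t^c`-component is `ker(s)/im(s+η)` for `c` even and
`ker(s+η)/im(s)` for `c` odd.

We encode the action of `s` on `M` by a `k`-linear endomorphism `S` with `S² = ηS`; the
`t^c`-component of `M[t,t⁻¹]` is a copy of `M` and the component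
`d c : (t^c`-component`) → (t^{c+1}`-component`)` of the differential is `S` for `c` even and
`S + η·id` for `c` odd.  The homology statement is expressed by the identification of the
kernels of the outgoing differentials and the images of the incoming ones.
-/

variable {k M : Type*} [CommRing k] [AddCommGroup M] [Module k M]

/-- The `t^c → t^{c+1}` component of the differential on `M[t,t⁻¹]`. -/
noncomputable def lauD (η : k) (S : M →ₗ[k] M) (c : ℤ) : M →ₗ[k] M :=
  if Even c then S else S + η • LinearMap.id

theorem statement15 (η : k) (hη : 2 * η = 0)
    (S : M →ₗ[k] M) (hS : S ∘ₗ S = η • S) :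
    (∀ c : ℤ, lauD η S (c + 1) ∘ₗ lauD η S c = 0) ∧
      (∀ c : ℤ, Even c →
        LinearMap.ker (lauD η S c) = LinearMap.ker S ∧
        LinearMap.range (lauD η S (c - 1)) = LinearMap.range (S + η • LinearMap.id)) ∧
      (∀ c : ℤ, ¬ Even c →
        LinearMap.ker (lauD η S c) = LinearMap.ker (S + η • LinearMap.id) ∧
        LinearMap.range (lauD η S (c - 1)) = LinearMap.range S) := by
  have key : (S + η • LinearMap.id) ∘ₗ S = 0 := by
    rw [LinearMap.add_comp, hS, LinearMap.smul_comp, LinearMap.id_comp,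
      ← add_smul, ← two_mul, hη, zero_smul]
  have key2 : S ∘ₗ (S + η • LinearMap.id) = 0 := by
    rw [LinearMap.comp_add, hS, LinearMap.comp_smul, LinearMap.comp_id,
      ← add_smul, ← two_mul, hη, zero_smul]
  refine ⟨fun c => ?_, fun c hc => ?_, fun c hc => ?_⟩
  · by_cases h : Even c
    · have h1 : ¬ Even (c + 1) := by simp [Int.even_add_one, h]
      simp [lauD, h, h1, key]
    · have h1 : Even (c + 1) := by simpa [Int.even_add_one] using h
      simp [lauD, h, h1, key2]
  · have h1 : ¬ Even (c - 1) := by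
      simp only [Int.even_iff] at hc ⊢; omega
    simp [lauD, hc, h1]
  · have h1 : Even (c - 1) := by
      simp only [Int.even_iff] at hc ⊢; omega
    simp [lauD, hc, h1]
end

section
/- Let (H, ∂) be a Cartan–Eilenberg system over ℤ ∪ {±∞} satisfying condition (SP.5) (colim_j H(i,j) ≅ H(i,∞) for all i). If the canonical homomorphism colim_j H(i,j) → H(i,∞) is an isomorphism for one finite i, then it is an isomorphism for every i ∈ ℤ ∪ {−∞}. -/
/-!
**Statement 18.**  Let `(H, ∂)` be a Cartan–Eilenberg system over `ℤ ∪ {±∞}` (indexed below by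
`I = WithBot (WithTop ℤ)`, with `⊥ = −∞`, `⊤ = +∞`): it assigns to each pair `i ≤ j` an
abelian group `H i j`, functorially (maps `η`), together with connecting maps
`∂ : H j k → H i j` for `i ≤ j ≤ k`, natural in the triple, fitting into long exact sequences
`⋯ → H i j → H i k → H j k → ∂ → H i j → ⋯`.  Condition (SP.5) at `i` states that the
canonical homomorphism `colim_j H i j → H i ∞` is an isomorphism; for a colimit over the
directed poset `{j ∈ ℤ | i ≤ j}` this is unpacked below as the two conditions `SP5` (every
element of `H i ∞` comes from a finite stage, and every element of a finite stage that dies in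
`H i ∞` dies at some finite stage).  The theorem: if (SP.5) holds at one finite `i`, then it
holds at every `i ∈ ℤ ∪ {−∞}`.
-/

open scoped Classical

abbrev CEIdx := WithBot (WithTop ℤ)

/-- The canonical inclusion `ℤ → ℤ ∪ {±∞}`. -/
def ceOf (n : ℤ) : CEIdx := ((n : WithTop ℤ) : WithBot (WithTop ℤ))

/-- Unpacked form of condition (SP.5) at `i`: the canonical map
`colim_j H(i,j) → H(i,∞)` is an isomorphism. -/
def SP5 (H : CEIdx → CEIdx → Type*) [∀ i j, AddCommGroup (H i j)]
    (η : ∀ i i' j j', i ≤ i' → j ≤ j' → H i j →+ H i' j') (i : CEIdx) : Prop :=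
  (∀ x : H i ⊤, ∃ (j : ℤ) (_hij : i ≤ ceOf j),
      x ∈ Set.range (η i i (ceOf j) ⊤ le_rfl le_top)) ∧
  (∀ (j : ℤ) (_hij : i ≤ ceOf j) (y : H i (ceOf j)),
      η i i (ceOf j) ⊤ le_rfl le_top y = 0 →
      ∃ (j' : ℤ) (hjj' : ceOf j ≤ ceOf j'),
        η i i (ceOf j) (ceOf j') le_rfl hjj' y = 0)

lemma ceOf_mono {p q : ℤ} (h : p ≤ q) : ceOf p ≤ ceOf q := by
  simp only [ceOf, WithBot.coe_le_coe, WithTop.coe_le_coe]; exact h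

section Aux

variable (H : CEIdx → CEIdx → Type*) [∀ i j, AddCommGroup (H i j)]
    (η : ∀ i i' j j', i ≤ i' → j ≤ j' → H i j →+ H i' j')
    (η_id : ∀ i j (h₁ : i ≤ i) (h₂ : j ≤ j), η i i j j h₁ h₂ = AddMonoidHom.id _)
    (η_comp : ∀ i i' i'' j j' j'' (h₁ : i ≤ i') (h₂ : j ≤ j') (h₁' : i' ≤ i'')
      (h₂' : j' ≤ j''),
      (η i' i'' j' j'' h₁' h₂').comp (η i i' j j' h₁ h₂)
        = η i i'' j j'' (h₁.trans h₁') (h₂.trans h₂'))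
    (d : ∀ i j k, i ≤ j → j ≤ k → H j k →+ H i j)
    (d_nat : ∀ i i' j j' k k' (hij : i ≤ j) (hjk : j ≤ k) (hij' : i' ≤ j') (hjk' : j' ≤ k')
      (h₁ : i ≤ i') (h₂ : j ≤ j') (h₃ : k ≤ k'),
      (η i i' j j' h₁ h₂).comp (d i j k hij hjk)
        = (d i' j' k' hij' hjk').comp (η j j' k k' h₂ h₃))
    (hex₁ : ∀ i j k (hij : i ≤ j) (hjk : j ≤ k),
      Function.Exact (η i i j k le_rfl hjk) (η i j k k hij le_rfl))
    (hex₂ : ∀ i j k (hij : i ≤ j) (hjk : j ≤ k),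
      Function.Exact (η i j k k hij le_rfl) (d i j k hij hjk))
    (hex₃ : ∀ i j k (hij : i ≤ j) (hjk : j ≤ k),
      Function.Exact (d i j k hij hjk) (η i i j k le_rfl hjk))

include η_comp in
lemma etaeta : ∀ (i i' i'' j j' j'' : CEIdx) (h₁ : i ≤ i') (h₂ : j ≤ j') (h₁' : i' ≤ i'')
    (h₂' : j' ≤ j'') (x : H i j),
    η i' i'' j' j'' h₁' h₂' (η i i' j j' h₁ h₂ x)
      = η i i'' j j'' (h₁.trans h₁') (h₂.trans h₂') x := by
  intro i i' i'' j j' j'' h₁ h₂ h₁' h₂' x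
  rw [← η_comp i i' i'' j j' j'' h₁ h₂ h₁' h₂']
  rfl

include η_id d_nat in
lemma deta : ∀ (a b k k' : CEIdx) (hab : a ≤ b) (hbk : b ≤ k) (hbk' : b ≤ k')
    (hkk' : k ≤ k') (x : H b k),
    d a b k' hab hbk' (η b b k k' le_rfl hkk' x) = d a b k hab hbk x := by
  intro a b k k' hab hbk hbk' hkk' x
  have h := DFunLike.congr_fun
    (d_nat a a b b k k' hab hbk hab hbk' le_rfl le_rfl hkk') x
  rw [η_id] at h
  simpa using h.symm

-- Direction A: SP5 at `a` implies SP5 at finite `b = ceOf m` for `a ≤ b`.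
include η_id η_comp d_nat hex₁ hex₂ hex₃ in
lemma dirA (a : CEIdx) (m : ℤ) (ham : a ≤ ceOf m) (ha : SP5 H η a) :
    SP5 H η (ceOf m) := by
  have ηη := etaeta H η η_comp
  have dη := deta H η η_id d d_nat
  set b := ceOf m with hb
  constructor
  · -- surjectivity
    intro x
    have hu0 : η a a b ⊤ le_rfl le_top (d a b ⊤ ham le_top x) = 0 :=
      (hex₃ a b ⊤ ham le_top).apply_apply_eq_zero x
    obtain ⟨j', hjj', hu⟩ := ha.2 m ham (d a b ⊤ ham le_top x) hu0
    obtain ⟨x', hx'⟩ := ((hex₃ a b (ceOf j') ham hjj') _).mp hu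
    have hd0 : d a b ⊤ ham le_top (x - η b b (ceOf j') ⊤ le_rfl le_top x') = 0 := by
      rw [map_sub, dη a b (ceOf j') ⊤ ham hjj' le_top le_top x', hx', sub_self]
    obtain ⟨z, hz⟩ := ((hex₂ a b ⊤ ham le_top) _).mp hd0
    obtain ⟨l, hal, w, hw⟩ := ha.1 z
    have hj'm : ceOf j' ≤ ceOf (max j' l) := ceOf_mono (le_max_left _ _)
    have hlm : ceOf l ≤ ceOf (max j' l) := ceOf_mono (le_max_right _ _)
    refine ⟨max j' l, hjj'.trans hj'm,
      η b b (ceOf j') (ceOf (max j' l)) le_rfl hj'm x'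
        + η a b (ceOf l) (ceOf (max j' l)) ham hlm w, ?_⟩
    rw [map_add, ηη, ηη]
    have h1 : η a b (ceOf l) ⊤ ham le_top w = x - η b b (ceOf j') ⊤ le_rfl le_top x' := by
      rw [← ηη a a b (ceOf l) ⊤ ⊤ le_rfl le_top ham le_rfl w, hw]; exact hz
    rw [h1]
    abel
  · -- injectivity
    intro j hmj y hy
    have haj : a ≤ ceOf j := ham.trans hmj
    have hδ : d a b (ceOf j) ham hmj y = 0 := by
      rw [← dη a b (ceOf j) ⊤ ham hmj le_top le_top y, hy, map_zero]
    obtain ⟨w, hw⟩ := ((hex₂ a b (ceOf j) ham hmj) y).mp hδ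
    have h1 : η a b ⊤ ⊤ ham le_rfl (η a a (ceOf j) ⊤ le_rfl le_top w) = 0 := by
      rw [ηη, ← ηη a b b (ceOf j) (ceOf j) ⊤ ham le_rfl le_rfl le_top w, hw, hy]
    obtain ⟨u, hu⟩ := ((hex₁ a b ⊤ ham le_top) _).mp h1
    have h2 : η a a (ceOf j) ⊤ le_rfl le_top
        (w - η a a b (ceOf j) le_rfl hmj u) = 0 := by
      rw [map_sub, ηη, hu, sub_self]
    obtain ⟨j', hjj', hkill⟩ := ha.2 j haj _ h2
    refine ⟨j', hjj', ?_⟩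
    have h3 : η a a (ceOf j) (ceOf j') le_rfl hjj' w
        = η a a b (ceOf j') le_rfl (hmj.trans hjj') u := by
      have := hkill
      rw [map_sub, sub_eq_zero, ηη] at this
      exact this
    have h4 : η a b (ceOf j') (ceOf j') ham le_rfl
        (η a a b (ceOf j') le_rfl (hmj.trans hjj') u) = 0 :=
      (hex₁ a b (ceOf j') ham (hmj.trans hjj')).apply_apply_eq_zero u
    have e1 : η b b (ceOf j) (ceOf j') le_rfl hjj' y
        = η a b (ceOf j) (ceOf j') ham hjj' w := by
      rw [← hw, ηη]
    have e2 : η a b (ceOf j) (ceOf j') ham hjj' w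
        = η a b (ceOf j') (ceOf j') ham le_rfl
            (η a a (ceOf j) (ceOf j') le_rfl hjj' w) :=
      (ηη a a b (ceOf j) (ceOf j') (ceOf j') le_rfl hjj' ham le_rfl w).symm
    rw [e1, e2, h3]
    exact h4

-- Direction B: SP5 at finite `b = ceOf m` implies SP5 at `a ≤ b`.
include η_id η_comp d_nat hex₁ hex₂ hex₃ in
lemma dirB (a : CEIdx) (m : ℤ) (ham : a ≤ ceOf m) (hbSP : SP5 H η (ceOf m)) :
    SP5 H η a := by
  have ηη := etaeta H η η_comp
  have dη := deta H η η_id d d_nat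
  set b := ceOf m with hb
  constructor
  · -- surjectivity
    intro x
    obtain ⟨l, hml, z, hz⟩ := hbSP.1 (η a b ⊤ ⊤ ham le_rfl x)
    have hal : a ≤ ceOf l := ham.trans hml
    have hδz : d a b (ceOf l) ham hml z = 0 := by
      rw [← dη a b (ceOf l) ⊤ ham hml le_top le_top z, hz]
      exact (hex₂ a b ⊤ ham le_top).apply_apply_eq_zero x
    obtain ⟨w, hw⟩ := ((hex₂ a b (ceOf l) ham hml) z).mp hδz
    have h1 : η a b ⊤ ⊤ ham le_rfl
        (x - η a a (ceOf l) ⊤ le_rfl le_top w) = 0 := by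
      rw [map_sub, ηη]
      have : η a b (ceOf l) ⊤ ham le_top w
          = η a b ⊤ ⊤ ham le_rfl x := by
        rw [← hz, ← hw, ηη]
      rw [this, sub_self]
    obtain ⟨u, hu⟩ := ((hex₁ a b ⊤ ham le_top) _).mp h1
    have hlm : ceOf l ≤ ceOf (max l m) := ceOf_mono (le_max_left _ _)
    have hmm : b ≤ ceOf (max l m) := ceOf_mono (le_max_right _ _)
    refine ⟨max l m, ham.trans hmm,
      η a a (ceOf l) (ceOf (max l m)) le_rfl hlm w
        + η a a b (ceOf (max l m)) le_rfl hmm u, ?_⟩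
    rw [map_add, ηη, ηη, hu]
    abel
  · -- injectivity
    intro j haj y hy
    -- first push `y` to stage `j₁ = max j m ≥ m`
    set j₁ := max j m with hj₁
    have hjj₁ : ceOf j ≤ ceOf j₁ := ceOf_mono (le_max_left _ _)
    have hmj₁ : b ≤ ceOf j₁ := ceOf_mono (le_max_right _ _)
    set y₁ := η a a (ceOf j) (ceOf j₁) le_rfl hjj₁ y with hy₁def
    have hy₁ : η a a (ceOf j₁) ⊤ le_rfl le_top y₁ = 0 := by
      rw [hy₁def, ηη]; exact hy
    have hβ : η b b (ceOf j₁) ⊤ le_rfl le_top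
        (η a b (ceOf j₁) (ceOf j₁) ham le_rfl y₁) = 0 := by
      rw [ηη, ← ηη a a b (ceOf j₁) ⊤ ⊤ le_rfl le_top ham le_rfl y₁, hy₁, map_zero]
    obtain ⟨j', hj₁j', hk⟩ := hbSP.2 j₁ hmj₁ _ hβ
    have haj' : a ≤ ceOf j' := haj.trans (hjj₁.trans hj₁j')
    set y' := η a a (ceOf j₁) (ceOf j') le_rfl hj₁j' y₁ with hy'def
    have hy'0 : η a b (ceOf j') (ceOf j') ham le_rfl y' = 0 := by
      rw [hy'def, ηη]
      rw [ηη] at hk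
      exact hk
    obtain ⟨u, hu⟩ := ((hex₁ a b (ceOf j') ham (hmj₁.trans hj₁j')) y').mp hy'0
    have hα : η a a b ⊤ le_rfl le_top u = 0 := by
      have h5 : η a a (ceOf j') ⊤ le_rfl le_top y' = 0 := by
        rw [hy'def, ηη]; exact hy₁
      rw [← hu, ηη] at h5
      exact h5
    obtain ⟨x, hx⟩ := ((hex₃ a b ⊤ ham le_top) u).mp hα
    obtain ⟨l, hml, z, hz⟩ := hbSP.1 x
    have hu' : d a b (ceOf l) ham hml z = u := by
      rw [← hx, ← hz, dη]
    have hj'J : ceOf j' ≤ ceOf (max j' l) := ceOf_mono (le_max_left _ _)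
    have hlJ : ceOf l ≤ ceOf (max j' l) := ceOf_mono (le_max_right _ _)
    have hmJ : b ≤ ceOf (max j' l) := hml.trans hlJ
    refine ⟨max j' l, (hjj₁.trans hj₁j').trans hj'J, ?_⟩
    have e1 : η a a (ceOf j) (ceOf (max j' l)) le_rfl ((hjj₁.trans hj₁j').trans hj'J) y
        = η a a (ceOf j') (ceOf (max j' l)) le_rfl hj'J y' := by
      rw [hy'def, hy₁def, ηη, ηη]
    have e2 : η a a (ceOf j') (ceOf (max j' l)) le_rfl hj'J y'
        = η a a b (ceOf (max j' l)) le_rfl hmJ u := by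
      rw [← hu, ηη]
    have e3 : η a a b (ceOf (max j' l)) le_rfl hmJ u
        = η a a b (ceOf (max j' l)) le_rfl hmJ
            (d a b (ceOf (max j' l)) ham hmJ (η b b (ceOf l) (ceOf (max j' l)) le_rfl hlJ z)) := by
      rw [dη a b (ceOf l) (ceOf (max j' l)) ham hml hmJ hlJ z, hu']
    rw [e1, e2, e3]
    exact (hex₃ a b (ceOf (max j' l)) ham hmJ).apply_apply_eq_zero _

end Aux

theorem statement18
    (H : CEIdx → CEIdx → Type*) [∀ i j, AddCommGroup (H i j)]
    -- the functorial structure maps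
    (η : ∀ i i' j j', i ≤ i' → j ≤ j' → H i j →+ H i' j')
    (η_id : ∀ i j (h₁ : i ≤ i) (h₂ : j ≤ j), η i i j j h₁ h₂ = AddMonoidHom.id _)
    (η_comp : ∀ i i' i'' j j' j'' (h₁ : i ≤ i') (h₂ : j ≤ j') (h₁' : i' ≤ i'')
      (h₂' : j' ≤ j''),
      (η i' i'' j' j'' h₁' h₂').comp (η i i' j j' h₁ h₂)
        = η i i'' j j'' (h₁.trans h₁') (h₂.trans h₂'))
    -- the connecting maps (of total degree −1, which we suppress)
    (d : ∀ i j k, i ≤ j → j ≤ k → H j k →+ H i j)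
    (d_nat : ∀ i i' j j' k k' (hij : i ≤ j) (hjk : j ≤ k) (hij' : i' ≤ j') (hjk' : j' ≤ k')
      (h₁ : i ≤ i') (h₂ : j ≤ j') (h₃ : k ≤ k'),
      (η i i' j j' h₁ h₂).comp (d i j k hij hjk)
        = (d i' j' k' hij' hjk').comp (η j j' k k' h₂ h₃))
    -- exactness of the triangle of each triple `i ≤ j ≤ k`
    (hex₁ : ∀ i j k (hij : i ≤ j) (hjk : j ≤ k),
      Function.Exact (η i i j k le_rfl hjk) (η i j k k hij le_rfl))
    (hex₂ : ∀ i j k (hij : i ≤ j) (hjk : j ≤ k),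
      Function.Exact (η i j k k hij le_rfl) (d i j k hij hjk))
    (hex₃ : ∀ i j k (hij : i ≤ j) (hjk : j ≤ k),
      Function.Exact (d i j k hij hjk) (η i i j k le_rfl hjk))
    -- (SP.5) holds at one finite index
    (i₀ : ℤ) (h₀ : SP5 H η (ceOf i₀)) :
    ∀ i : CEIdx, i ≠ ⊤ → SP5 H η i := by
  intro i hi
  rcases le_total i (ceOf i₀) with h | h
  · exact dirB H η η_id η_comp d d_nat hex₁ hex₂ hex₃ i i₀ h h₀
  · induction i using WithBot.recBotCoe with
    | bot => exact dirB H η η_id η_comp d d_nat hex₁ hex₂ hex₃ ⊥ i₀ bot_le h₀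
    | coe t =>
      induction t using WithTop.recTopCoe with
      | top => exact absurd rfl hi
      | coe n => exact dirA H η η_id η_comp d d_nat hex₁ hex₂ hex₃ (ceOf i₀) n h h₀
end
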